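/- arXiv:1909.12890 — 4 statements merged into one kernel-verified Lean document; each statement's English description precedes it below -/
import Mathlib

section
/- Let H be a d × m real matrix and let C ⊆ ℝ^d be the smallest subspace containing the all-ones vector 𝟙 and closed under g ↦ g · H_j (Hadamard product with each column H_j of H, j = 1,...,m). If the rows of H are pairwise distinct, then C = ℝ^d. -/
/-- Let `C` be the smallest subspace of `ℝ^d` containing `𝟙` and
closed under Hadamard multiplication by each column of `H`. If the rows of `H`
are pairwise distinct then `C = ℝ^d`. -/
theorem smallest_hadamard_subspace_eq_top (d m : ℕ) (H : Matrix (Fin d) (Fin m) ℝ)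
    (C : Submodule ℝ (Fin d → ℝ))
    (hone : (fun _ => (1:ℝ)) ∈ C)
    (hclosed : ∀ g ∈ C, ∀ j : Fin m, (fun i => g i * H i j) ∈ C)
    (hmin : ∀ D : Submodule ℝ (Fin d → ℝ), (fun _ => (1:ℝ)) ∈ D →
      (∀ g ∈ D, ∀ j : Fin m, (fun i => g i * H i j) ∈ D) → C ≤ D)
    (hrows : ∀ i k : Fin d, i ≠ k → H i ≠ H k) :
    C = ⊤ := by
  rw [eq_top_iff]
  have hsub : ∀ g ∈ C, ∀ (j : Fin m) (c : ℝ), (fun i => g i * (H i j - c)) ∈ C := by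
    intro g hg j c
    have heq : (fun i => g i * (H i j - c)) = (fun i => g i * H i j) - c • g := by
      funext i; simp [mul_sub]; ring
    rw [heq]
    exact C.sub_mem (hclosed g hg j) (C.smul_mem c hg)
  have hsingle : ∀ i₀ : Fin d, Pi.single i₀ (1:ℝ) ∈ C := by
    intro i₀
    have hchoice : ∀ k : Fin d, k ≠ i₀ → ∃ j : Fin m, H i₀ j ≠ H k j := by
      intro k hk
      by_contra hcon
      push_neg at hcon
      exact hrows i₀ k (Ne.symm hk) (funext hcon)
    choose j hj using hchoice
    set F : Fin d → Fin d → ℝ :=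
      fun k i => if h : k = i₀ then 1 else H i (j k h) - H k (j k h) with hF
    have hprod : ∀ s : Finset (Fin d), (fun i => ∏ k ∈ s, F k i) ∈ C := by
      intro s
      induction s using Finset.induction with
      | empty => simpa using hone
      | @insert a s ha ih =>
        have heq : (fun i => ∏ k ∈ insert a s, F k i)
            = fun i => (∏ k ∈ s, F k i) * F a i := by
          funext i; rw [Finset.prod_insert ha, mul_comm]
        rw [heq]
        by_cases h : a = i₀
        · have : (fun i => (∏ k ∈ s, F k i) * F a i) = fun i => ∏ k ∈ s, F k i := by
            funext i; simp [hF, h]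
          rw [this]; exact ih
        · have : (fun i => (∏ k ∈ s, F k i) * F a i)
              = fun i => (∏ k ∈ s, F k i) * (H i (j a h) - H a (j a h)) := by
            funext i; simp [hF, h]
          rw [this]
          exact hsub _ ih _ _
    have he : (fun i => ∏ k, F k i) ∈ C := hprod Finset.univ
    set e : Fin d → ℝ := fun i => ∏ k, F k i with heDef
    have he0 : e i₀ ≠ 0 := by
      rw [heDef]
      apply Finset.prod_ne_zero_iff.mpr
      intro k _
      by_cases h : k = i₀
      · simp [hF, h]
      · simp only [hF, dif_neg h]
        exact sub_ne_zero_of_ne (hj k h)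
    have hzero : ∀ i : Fin d, i ≠ i₀ → e i = 0 := by
      intro i hi
      rw [heDef]
      apply Finset.prod_eq_zero (Finset.mem_univ i)
      simp [hF, hi]
    have hsingle_eq : Pi.single i₀ (1:ℝ) = (e i₀)⁻¹ • e := by
      funext i
      by_cases h : i = i₀
      · subst h; simp [Pi.single_eq_same, inv_mul_cancel₀ he0]
      · simp [Pi.single_eq_of_ne h, hzero i h]
    rw [hsingle_eq]
    exact C.smul_mem _ he
  intro v _
  have hv : v = ∑ i, v i • (Pi.single i (1:ℝ) : Fin d → ℝ) := by
    funext i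
    simp [Finset.sum_apply, Pi.single_apply, mul_ite]
  rw [hv]
  exact Submodule.sum_mem C fun i _ => C.smul_mem (v i) (hsingle i)
end

section
/- Let A ∈ ℝ^{d×d} be a generator matrix of a continuous-time Markov chain (rows sum to zero) and H ∈ ℝ^{d×m}. Define C ⊆ ℝ^d as the smallest subspace such that 𝟙 ∈ C, and for every g ∈ C: Ag ∈ C and g · H_j ∈ C for each column H_j of H. If the classical observability condition holds, i.e., the columns of H, AH, A²H, ..., A^{d-1}H span ℝ^d, then C = ℝ^d. -/
open Matrix

/-- Let `A` be a generator matrix (rows sum to zero) and `H` a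
`d × m` matrix. Let `C` be the smallest subspace containing `𝟙` and closed under
`g ↦ A g` and Hadamard multiplication by the columns of `H`. If the columns of
`H, AH, …, A^{d-1}H` span `ℝ^d` (classical observability), then `C = ℝ^d`. -/
theorem classical_observability_implies_nonlinear (d m : ℕ)
    (A : Matrix (Fin d) (Fin d) ℝ) (hgen : ∀ i, (∑ j, A i j) = 0)
    (H : Matrix (Fin d) (Fin m) ℝ)
    (C : Submodule ℝ (Fin d → ℝ))
    (hone : (fun _ => (1:ℝ)) ∈ C)
    (hA : ∀ g ∈ C, A.mulVec g ∈ C)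
    (hclosed : ∀ g ∈ C, ∀ j : Fin m, (fun i => g i * H i j) ∈ C)
    (hmin : ∀ D : Submodule ℝ (Fin d → ℝ), (fun _ => (1:ℝ)) ∈ D →
      (∀ g ∈ D, A.mulVec g ∈ D) →
      (∀ g ∈ D, ∀ j : Fin m, (fun i => g i * H i j) ∈ D) → C ≤ D)
    (hobs : Submodule.span ℝ {v : Fin d → ℝ |
        ∃ k : ℕ, k < d ∧ ∃ j : Fin m, v = fun i => (A ^ k * H) i j} = ⊤) :
    C = ⊤ := by
  have key : ∀ k : ℕ, ∀ j : Fin m, (fun i => (A ^ k * H) i j) ∈ C := by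
    intro k
    induction k with
    | zero =>
      intro j
      have := hclosed _ hone j
      simpa using this
    | succ n ih =>
      intro j
      have h1 : A.mulVec (fun i => (A ^ n * H) i j) ∈ C := hA _ (ih j)
      have h2 : (fun i => (A ^ (n+1) * H) i j) = A.mulVec (fun i => (A ^ n * H) i j) := by
        funext i
        rw [pow_succ', Matrix.mul_assoc]
        simp [Matrix.mulVec, Matrix.mul_apply, dotProduct]
      rw [h2]; exact h1
  rw [eq_top_iff, ← hobs]
  apply Submodule.span_le.mpr
  rintro v ⟨k, _, j, rfl⟩
  exact key k j
end

section
/- Let A ∈ ℝ^{d×d} and H ∈ ℝ^{m×d}, T > 0. The reachable set R = { y_0 ∈ ℝ^d : y_0 = ∫_0^T e^{Aᵀ t} Hᵀ u_t dt for some continuous u : [0,T] → ℝ^m } is a linear subspace of ℝ^d equal to span of the columns of Hᵀ, AᵀHᵀ, ..., (Aᵀ)^{d-1} Hᵀ. -/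
open Matrix

/-!
Both sides are subspaces of `ℝ^d`, so it suffices to show that they have the same orthogonal
complement. A vector `y` is orthogonal to every `∫₀ᵀ K t u t dt`, where `K t = e^{tAᵀ}Hᵀ`, iff
`yᵀ K t = 0` on `[0, T]`; the input `u t = (K t)ᵀ y` turns orthogonality into
`∫₀ᵀ |yᵀ K t|² dt = 0`.
Differentiating repeatedly on `[0, T]` and expanding the exponential series, this holds iff
`yᵀ (Aᵀ)ᵏ Hᵀ = 0` for every `k`, and by Cayley–Hamilton `k < d` suffices, which says that `y` is
orthogonal to the columns of the controllability matrix.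
-/

theorem Submodule.eq_of_forall_dotProduct_eq_zero_iff {K n : Type*} [Field K] [Fintype n]
    {N N' : Submodule K (n → K)}
    (h : ∀ y, (∀ v ∈ N, y ⬝ᵥ v = 0) ↔ ∀ v ∈ N', y ⬝ᵥ v = 0) : N = N' := by
  classical
  rw [← Subspace.dualAnnihilator_inj]
  ext φ
  obtain ⟨y, rfl⟩ := (dotProductEquiv K n).surjective φ
  simpa [Submodule.mem_dualAnnihilator] using h y

namespace Matrix

open NormedSpace Set MeasureTheory

variable {n : Type*} [Fintype n]

theorem forall_dotProduct_span_columns_eq_zero_iff {R p : Type*} [CommRing R] [Fintype p]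
    [DecidableEq p] (M : ℕ → Matrix n p R) (N : ℕ) (y : n → R) :
    (∀ v ∈ Submodule.span R {v | ∃ k, k < N ∧ ∃ i : p, v = M k *ᵥ Pi.single i 1},
      y ⬝ᵥ v = 0) ↔ ∀ k < N, y ᵥ* M k = 0 := by
  change Submodule.span R _ ≤ LinearMap.ker (dotProductBilin R R y) ↔ _
  rw [Submodule.span_le]
  have hcol : ∀ k (i : p), y ⬝ᵥ M k *ᵥ Pi.single i 1 = (y ᵥ* M k) i := fun k i => by
    rw [dotProduct_mulVec, dotProduct_single, mul_one]
  refine ⟨fun h k hk => funext fun i => ?_, ?_⟩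
  · rw [← hcol]
    exact h ⟨k, hk, i, rfl⟩
  · rintro h _ ⟨k, hk, i, rfl⟩
    rw [SetLike.mem_coe, LinearMap.mem_ker, dotProductBilin_apply_apply, hcol, h k hk,
      Pi.zero_apply]

theorem map_pow_eq_zero_of_forall_lt_card {R M : Type*} [DecidableEq n] [CommRing R]
    [Nontrivial R] [AddCommGroup M] [Module R M] (φ : Matrix n n R →ₗ[R] M) {B : Matrix n n R}
    (h : ∀ k < Fintype.card n, φ (B ^ k) = 0) (k : ℕ) : φ (B ^ k) = 0 := by
  rcases isEmpty_or_nonempty n with hn | hn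
  · rw [Subsingleton.elim (B ^ k) 0, map_zero]
  have hdeg : (Polynomial.X ^ k %ₘ B.charpoly).natDegree < Fintype.card n := by
    have h1 : B.charpoly ≠ 1 := fun h1 => Fintype.card_ne_zero <| by
      rw [← B.charpoly_natDegree_eq_dim, h1, Polynomial.natDegree_one]
    simpa [B.charpoly_natDegree_eq_dim] using
      Polynomial.natDegree_modByMonic_lt _ B.charpoly_monic h1
  rw [pow_eq_aeval_mod_charpoly, Polynomial.aeval_eq_sum_range' hdeg, map_sum]
  exact Finset.sum_eq_zero fun j hj => by rw [map_smul, h j (Finset.mem_range.1 hj), smul_zero]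

section Exp

attribute [local instance] Matrix.linftyOpNormedRing Matrix.linftyOpNormedAlgebra

variable [DecidableEq n] {E : Type*} [NormedAddCommGroup E] [NormedSpace ℝ E]

theorem continuous_exp_smul (B : Matrix n n ℝ) : Continuous fun t : ℝ => exp (t • B) :=
  exp_continuous.comp (continuous_id.smul continuous_const)

theorem map_exp_smul_eq_zero (φ : Matrix n n ℝ →ₗ[ℝ] E) {B : Matrix n n ℝ}
    (h : ∀ k, φ (B ^ k) = 0) (t : ℝ) : φ (exp (t • B)) = 0 := by
  rw [exp_eq_tsum ℝ]
  refine (φ.toContinuousLinearMap.map_tsum (expSeries_summable' (𝕂 := ℝ) (t • B))).trans ?_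
  change ∑' k : ℕ, φ ((k.factorial⁻¹ : ℝ) • (t • B) ^ k) = 0
  simp [smul_pow, h]

theorem map_pow_eq_zero_of_map_exp_smul_eq_zero (φ : Matrix n n ℝ →ₗ[ℝ] E) {B : Matrix n n ℝ}
    {T : ℝ} (hT : 0 < T) (h : ∀ t ∈ Icc 0 T, φ (exp (t • B)) = 0) (k : ℕ) :
    φ (B ^ k) = 0 := by
  suffices ∀ k : ℕ, ∀ t ∈ Icc 0 T, φ (B ^ k * exp (t • B)) = 0 by
    simpa using this k 0 ⟨le_rfl, hT.le⟩
  intro k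
  induction k with
  | zero => simpa using h
  | succ k ih =>
    intro t ht
    have hderiv : HasDerivAt (fun s : ℝ => φ (B ^ k * exp (s • B)))
        (φ (B ^ (k + 1) * exp (t • B))) t := by
      rw [pow_succ, Matrix.mul_assoc]
      exact φ.toContinuousLinearMap.hasFDerivAt.comp_hasDerivAt t
        ((hasDerivAt_exp_smul_const' B t).const_mul (B ^ k))
    have hzero : HasDerivWithinAt (fun s : ℝ => φ (B ^ k * exp (s • B))) 0 (Icc 0 T) t :=
      (hasDerivWithinAt_const t _ 0).congr ih (ih t ht)
    exact (uniqueDiffOn_Icc hT t ht).eq_deriv _ hderiv.hasDerivWithinAt hzero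

theorem forall_map_exp_smul_eq_zero_iff (φ : Matrix n n ℝ →ₗ[ℝ] E) (B : Matrix n n ℝ)
    {T : ℝ} (hT : 0 < T) :
    (∀ t ∈ Icc 0 T, φ (exp (t • B)) = 0) ↔ ∀ k < Fintype.card n, φ (B ^ k) = 0 :=
  ⟨fun h k _ => map_pow_eq_zero_of_map_exp_smul_eq_zero φ hT h k,
    fun h t _ => map_exp_smul_eq_zero φ (map_pow_eq_zero_of_forall_lt_card φ h) t⟩

end Exp

section IntegralOperator

variable {p : Type*} [Fintype p]

noncomputable def integralOperator (K : C(ℝ, Matrix n p ℝ)) (T : ℝ) :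
    C(ℝ, p → ℝ) →ₗ[ℝ] (n → ℝ) where
  toFun u := ∫ t in 0..T, K t *ᵥ u t
  map_add' u v := by
    simp only [ContinuousMap.add_apply, mulVec_add]
    exact intervalIntegral.integral_add
      ((K.continuous.matrix_mulVec u.continuous).intervalIntegrable 0 T)
      ((K.continuous.matrix_mulVec v.continuous).intervalIntegrable 0 T)
  map_smul' c u := by
    simp only [ContinuousMap.smul_apply, mulVec_smul, intervalIntegral.integral_smul,
      RingHom.id_apply]

theorem dotProduct_integralOperator (K : C(ℝ, Matrix n p ℝ)) (T : ℝ) (y : n → ℝ)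
    (u : C(ℝ, p → ℝ)) :
    y ⬝ᵥ integralOperator K T u = ∫ t in 0..T, (y ᵥ* K t) ⬝ᵥ u t := by
  simp only [← dotProduct_mulVec]
  exact ((dotProductBilin ℝ ℝ y).toContinuousLinearMap.intervalIntegral_comp_comm
    ((K.continuous.matrix_mulVec u.continuous).intervalIntegrable 0 T)).symm

theorem forall_dotProduct_integralOperator_eq_zero_iff (K : C(ℝ, Matrix n p ℝ)) {T : ℝ}
    (hT : 0 < T) (y : n → ℝ) :
    (∀ v ∈ LinearMap.range (integralOperator K T), y ⬝ᵥ v = 0) ↔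
      ∀ t ∈ Icc 0 T, y ᵥ* K t = 0 := by
  simp only [LinearMap.mem_range, forall_exists_index, forall_apply_eq_imp_iff,
    dotProduct_integralOperator]
  constructor
  · intro h
    let g : C(ℝ, p → ℝ) := ⟨fun t => y ᵥ* K t, continuous_const.matrix_vecMul K.continuous⟩
    have hg : Continuous fun t => g t ⬝ᵥ g t := g.continuous.dotProduct g.continuous
    have hae : (fun t => g t ⬝ᵥ g t) =ᵐ[volume.restrict (Ioc 0 T)] 0 :=
      (intervalIntegral.integral_eq_zero_iff_of_le_of_nonneg_ae hT.le
        (ae_of_all _ fun t => Finset.sum_nonneg fun i _ => mul_self_nonneg (g t i))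
        (hg.intervalIntegrable 0 T)).1 (h g)
    rw [Measure.restrict_congr_set Ioc_ae_eq_Icc] at hae
    exact fun t ht => dotProduct_self_eq_zero.1
      (Measure.eqOn_Icc_of_ae_eq volume hT.ne hae hg.continuousOn continuousOn_const ht)
  · intro h u
    rw [intervalIntegral.integral_congr (g := fun _ => 0) fun t ht => ?_,
      intervalIntegral.integral_zero]
    rw [uIcc_of_le hT.le] at ht
    simp [h t ht]

end IntegralOperator

end Matrix

/-- The reachable set
`R = {∫_0^T e^{Aᵀt} Hᵀ u_t dt : u continuous}` equals the column span of
`[Hᵀ, AᵀHᵀ, …, (Aᵀ)^{d-1}Hᵀ]` (in particular it is a linear subspace). -/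
theorem reachable_set_eq_controllability_span (d m : ℕ)
    (A : Matrix (Fin d) (Fin d) ℝ) (H : Matrix (Fin m) (Fin d) ℝ)
    (T : ℝ) (hT : 0 < T) :
    {y₀ : Fin d → ℝ | ∃ u : ℝ → Fin m → ℝ, Continuous u ∧
        y₀ = ∫ t in (0:ℝ)..T, (NormedSpace.exp (t • Aᵀ)).mulVec (Hᵀ.mulVec (u t))}
      = ↑(Submodule.span ℝ {v : Fin d → ℝ |
          ∃ k : ℕ, k < d ∧ ∃ i : Fin m, v = (Aᵀ ^ k * Hᵀ).mulVec (Pi.single i 1)}) := by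
  let K : C(ℝ, Matrix (Fin d) (Fin m) ℝ) :=
    ⟨fun t => NormedSpace.exp (t • Aᵀ) * Hᵀ, (continuous_exp_smul Aᵀ).matrix_mul continuous_const⟩
  refine Eq.trans (b := (LinearMap.range (integralOperator K T) : Set (Fin d → ℝ))) ?_
    (congrArg _ ?_)
  · ext y₀
    simp only [mulVec_mulVec]
    exact ⟨fun ⟨u, hu, h⟩ => ⟨⟨u, hu⟩, h.symm⟩, fun ⟨u, h⟩ => ⟨u, u.continuous, h.symm⟩⟩
  refine Submodule.eq_of_forall_dotProduct_eq_zero_iff fun y => ?_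
  let φ : Matrix (Fin d) (Fin d) ℝ →ₗ[ℝ] Fin m → ℝ :=
    (vecMulBilin ℝ ℝ y).comp (mulRightLinearMap (Fin d) ℝ Hᵀ)
  have hφ := forall_map_exp_smul_eq_zero_iff φ Aᵀ hT
  rw [Fintype.card_fin] at hφ
  rw [forall_dotProduct_integralOperator_eq_zero_iff K hT,
    forall_dotProduct_span_columns_eq_zero_iff]
  exact hφ
end

section
/- Let A ∈ ℝ^{d×d} with A = 0 and H a d × m matrix. Define C ⊆ ℝ^d as the smallest subspace with 𝟙 ∈ C and closed under g ↦ Ag and g ↦ g · H_j for each column H_j. Then C = ℝ^d if and only if the rows of H are pairwise distinct. -/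
open Matrix

/-- With `A = 0`, let `C` be the smallest subspace of `ℝ^d`
containing `𝟙` and closed under `g ↦ A g` and Hadamard multiplication by the
columns of `H`. Then `C = ℝ^d` iff the rows of `H` are pairwise distinct. -/
theorem observable_iff_rows_distinct_of_A_zero (d m : ℕ)
    (A : Matrix (Fin d) (Fin d) ℝ) (hA0 : A = 0)
    (H : Matrix (Fin d) (Fin m) ℝ)
    (C : Submodule ℝ (Fin d → ℝ))
    (hone : (fun _ => (1:ℝ)) ∈ C)
    (hA : ∀ g ∈ C, A.mulVec g ∈ C)
    (hclosed : ∀ g ∈ C, ∀ j : Fin m, (fun i => g i * H i j) ∈ C)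
    (hmin : ∀ D : Submodule ℝ (Fin d → ℝ), (fun _ => (1:ℝ)) ∈ D →
      (∀ g ∈ D, A.mulVec g ∈ D) →
      (∀ g ∈ D, ∀ j : Fin m, (fun i => g i * H i j) ∈ D) → C ≤ D) :
    C = ⊤ ↔ ∀ i k : Fin d, i ≠ k → H i ≠ H k := by
  constructor
  · intro hC i k hik hrow
    set φ : (Fin d → ℝ) →ₗ[ℝ] ℝ :=
      (LinearMap.proj i : (Fin d → ℝ) →ₗ[ℝ] ℝ) - LinearMap.proj k with hφ
    have hCD : C ≤ LinearMap.ker φ := by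
      apply hmin
      · simp [hφ, LinearMap.mem_ker]
      · intro g hg
        simp [hA0, Matrix.zero_mulVec, hφ, LinearMap.mem_ker]
      · intro g hg j
        simp only [LinearMap.mem_ker, hφ, LinearMap.sub_apply,
          LinearMap.proj_apply] at hg ⊢
        have h1 : H i j = H k j := congrFun hrow j
        have h2 : g i = g k := by linarith
        rw [h1, h2]; ring
    have hmem : Pi.single i (1:ℝ) ∈ C := hC ▸ Submodule.mem_top
    have h2 := hCD hmem
    simp only [LinearMap.mem_ker, hφ, LinearMap.sub_apply, LinearMap.proj_apply,
      Pi.single_apply, if_pos rfl, if_neg (Ne.symm hik)] at h2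
    norm_num at h2
  · intro hsep
    have key : ∀ i : Fin d, (fun x : Fin d => if i = x then (1:ℝ) else 0) ∈ C := by
      intro i
      have hchoice : ∀ k : Fin d, k ≠ i → ∃ j, H i j ≠ H k j := by
        intro k hk
        by_contra h
        push_neg at h
        exact hsep i k (Ne.symm hk) (funext h)
      classical
      set f : Fin d → Fin d → ℝ := fun k x =>
        if h : k = i then 1
        else H x ((hchoice k h).choose) - H k ((hchoice k h).choose) with hf
      have hfC : ∀ s : Finset (Fin d), (fun x => ∏ k ∈ s, f k x) ∈ C := by
        intro s
        induction s using Finset.induction_on with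
        | empty => simpa using hone
        | @insert a s ha ih =>
          have hrw : (fun x => ∏ k ∈ insert a s, f k x)
              = fun x => f a x * ∏ k ∈ s, f k x := by
            funext x; rw [Finset.prod_insert ha]
          rw [hrw]
          by_cases hai : a = i
          · have : (fun x => f a x * ∏ k ∈ s, f k x) = fun x => ∏ k ∈ s, f k x := by
              funext x; simp [hf, hai]
            rw [this]; exact ih
          · set j := (hchoice a hai).choose with hj
            set c := H a j with hc
            have : (fun x => f a x * ∏ k ∈ s, f k x)
                = (fun x => (∏ k ∈ s, f k x) * H x j) + (-c) • fun x => ∏ k ∈ s, f k x := by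
              funext x
              simp only [hf, dif_neg hai, Pi.add_apply, Pi.smul_apply, smul_eq_mul]
              ring
            rw [this]
            exact C.add_mem (hclosed _ ih j) (C.smul_mem _ ih)
      have hv := hfC (Finset.univ.erase i)
      have hvi : (∏ k ∈ Finset.univ.erase i, f k i) ≠ 0 := by
        apply Finset.prod_ne_zero_iff.mpr
        intro k hk
        have hk' : k ≠ i := (Finset.mem_erase.mp hk).1
        simp only [hf, dif_neg hk']
        exact sub_ne_zero_of_ne (hchoice k hk').choose_spec
      have heq : (fun x : Fin d => if i = x then (1:ℝ) else 0)
          = (∏ k ∈ Finset.univ.erase i, f k i)⁻¹ • fun x => ∏ k ∈ Finset.univ.erase i, f k x := by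
        funext x
        by_cases hx : i = x
        · subst hx
          simp [inv_mul_cancel₀ hvi]
        · have hx' : x ≠ i := Ne.symm hx
          have : (∏ k ∈ Finset.univ.erase i, f k x) = 0 := by
            apply Finset.prod_eq_zero (Finset.mem_erase.mpr ⟨hx', Finset.mem_univ x⟩)
            simp [hf, dif_neg hx']
          simp [hx, this]
      rw [heq]
      exact C.smul_mem _ hv
    rw [Submodule.eq_top_iff']
    intro x
    rw [pi_eq_sum_univ x]
    exact C.sum_mem fun i _ => C.smul_mem _ (key i)
end
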